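/- arXiv:1909.01888 — 5 statements merged into one kernel-verified Lean document; each statement's English description precedes it below -/
import Mathlib

section
/- Let Σ be a symmetric positive semidefinite k×k real matrix with all entries nonnegative. Then the function z ↦ (z∘z)ᵀ Σ (z∘z), where z∘z denotes the componentwise (Hadamard) square, is convex on ℝ^k. -/
/-! The Hadamard square `z ↦ z ∘ z` is convex for the coordinatewise order and maps onto the
nonnegative orthant. On that orthant the quadratic form `u ↦ uᵀ S u` is convex (as `S` is
positive semidefinite) and monotone (as the entries of `S` are nonnegative), and a convex monotone
function of a convex map is convex. -/

open Matrix Set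

namespace Matrix

variable {ι R : Type*} [Fintype ι]

theorem mulVec_mono_of_nonneg [Semiring R] [PartialOrder R] [IsOrderedRing R]
    {S : Matrix ι ι R} (hS : ∀ i j, 0 ≤ S i j) {u v : ι → R} (huv : u ≤ v) :
    S *ᵥ u ≤ S *ᵥ v :=
  fun i => dotProduct_le_dotProduct_of_nonneg_left huv (hS i)

theorem monotoneOn_dotProduct_mulVec_of_nonneg [CommSemiring R] [PartialOrder R]
    [IsOrderedRing R] {S : Matrix ι ι R} (hS : ∀ i j, 0 ≤ S i j) :
    MonotoneOn (fun u => u ⬝ᵥ (S *ᵥ u)) (Ici 0) := by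
  intro u hu v hv huv
  have hSv : 0 ≤ S *ᵥ v := by simpa using mulVec_mono_of_nonneg hS hv
  calc u ⬝ᵥ (S *ᵥ u) ≤ u ⬝ᵥ (S *ᵥ v) :=
        dotProduct_le_dotProduct_of_nonneg_left (mulVec_mono_of_nonneg hS huv) hu
    _ ≤ v ⬝ᵥ (S *ᵥ v) := dotProduct_le_dotProduct_of_nonneg_right huv hSv

theorem PosSemidef.convexOn_dotProduct_mulVec {S : Matrix ι ι ℝ} (hS : S.PosSemidef) :
    ConvexOn ℝ univ (fun u => u ⬝ᵥ (S *ᵥ u)) := by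
  refine ⟨convex_univ, fun u _ v _ a b ha hb hab => ?_⟩
  obtain rfl : b = 1 - a := by linarith
  have hgap : a • (u ⬝ᵥ (S *ᵥ u)) + (1 - a) • (v ⬝ᵥ (S *ᵥ v))
      - (a • u + (1 - a) • v) ⬝ᵥ (S *ᵥ (a • u + (1 - a) • v))
      = a * (1 - a) * ((u - v) ⬝ᵥ (S *ᵥ (u - v))) := by
    simp only [mulVec_add, mulVec_sub, mulVec_smul, dotProduct_add, dotProduct_sub,
      add_dotProduct, sub_dotProduct, dotProduct_smul, smul_dotProduct, smul_eq_mul]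
    ring
  have := mul_nonneg (mul_nonneg ha hb) (hS.dotProduct_mulVec_nonneg (u - v))
  simp only [star_trivial] at this
  linarith

end Matrix

theorem convexOn_mul_self_pi {ι 𝕜 : Type*} [Field 𝕜] [LinearOrder 𝕜] [IsStrictOrderedRing 𝕜] :
    ConvexOn 𝕜 univ (fun z : ι → 𝕜 => z * z) :=
  ⟨convex_univ, fun x _ y _ a b ha hb hab i => by
    simpa [sq] using (even_two.convexOn_pow (𝕜 := 𝕜)).2 (mem_univ (x i)) (mem_univ (y i)) ha hb hab⟩

theorem range_mul_self_pi {ι : Type*} : range (fun z : ι → ℝ => z * z) = Ici 0 := by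
  refine subset_antisymm ?_ fun u hu =>
    ⟨fun i => √(u i), funext fun i => Real.mul_self_sqrt (hu i)⟩
  rintro _ ⟨z, rfl⟩ i
  exact mul_self_nonneg (z i)

/-- for a symmetric PSD matrix `S` with nonnegative entries,
`z ↦ (z∘z)ᵀ S (z∘z)` is convex (here `z * z` is the Hadamard square). -/
theorem hadamard_square_quartic_convex {k : ℕ} (S : Matrix (Fin k) (Fin k) ℝ)
    (hS : S.PosSemidef) (hnn : ∀ i j, 0 ≤ S i j) :
    ConvexOn ℝ Set.univ (fun z : Fin k → ℝ => (z * z) ⬝ᵥ (S *ᵥ (z * z))) := by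
  have hImage : (fun z : Fin k → ℝ => z * z) '' univ = Ici 0 := by
    rw [image_univ, range_mul_self_pi]
  refine ConvexOn.comp (g := fun u => u ⬝ᵥ (S *ᵥ u)) ?_ convexOn_mul_self_pi ?_
  · rw [hImage]
    exact hS.convexOn_dotProduct_mulVec.subset (subset_univ _) (convex_Ici 0)
  · rw [hImage]
    exact monotoneOn_dotProduct_mulVec_of_nonneg hnn
end

section
/- Let D and M be symmetric positive semidefinite n×n real matrices with D invertible and D ⪰ M (i.e., D − M positive semidefinite). Then M† ⪰ D⁻¹ restricted to the column space of M; concretely, for every vector w in the column space of M, wᵀ D⁻¹ w ≤ wᵀ M† w. -/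
open Matrix

/-- `Mp` satisfies the four Penrose conditions for a Moore–Penrose pseudoinverse of `M`. -/
def IsMoorePenroseInv {n : ℕ} (M Mp : Matrix (Fin n) (Fin n) ℝ) : Prop :=
  M * Mp * M = M ∧ Mp * M * Mp = Mp ∧ (M * Mp)ᵀ = M * Mp ∧ (Mp * M)ᵀ = Mp * M

/-!
Write `w = M v` and `u = D⁻¹ w`, so that `D u = M v`. The Penrose identity `M M† M = M` turns
`wᵀ M† w` into `vᵀ M v`, and `wᵀ D⁻¹ w = uᵀ D u`. Since `uᵀ M v = uᵀ D u`, expanding gives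
`(v - u)ᵀ M (v - u) + uᵀ (D - M) u = vᵀ M v - uᵀ D u`, and both terms on the left are
nonnegative.
-/

namespace Matrix

variable {ι : Type*} [Fintype ι]

theorem dotProduct_mulVec_mulVec_of_mul_mul_eq {R : Type*} [CommRing R] {M G : Matrix ι ι R}
    (hM : M.IsSymm) (hG : M * G * M = M) (v : ι → R) :
    (M *ᵥ v) ⬝ᵥ (G *ᵥ (M *ᵥ v)) = v ⬝ᵥ (M *ᵥ v) := by
  rw [dotProduct_comm, ← dotProduct_transpose_mulVec, hM.eq, mulVec_mulVec, mulVec_mulVec, hG]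

theorem dotProduct_mulVec_le_of_mulVec_eq {D M : Matrix ι ι ℝ} (hM : M.PosSemidef)
    (hDM : (D - M).PosSemidef) {u v : ι → ℝ} (h : D *ᵥ u = M *ᵥ v) :
    u ⬝ᵥ (D *ᵥ u) ≤ v ⬝ᵥ (M *ᵥ v) := by
  have hMuv : u ⬝ᵥ (M *ᵥ v) = u ⬝ᵥ (D *ᵥ u) := by rw [h]
  have hMvu : v ⬝ᵥ (M *ᵥ u) = u ⬝ᵥ (D *ᵥ u) := by
    rw [← dotProduct_transpose_mulVec, (isHermitian_iff_isSymm.mp hM.1).eq, hMuv]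
  have hM_nonneg : 0 ≤ (v - u) ⬝ᵥ (M *ᵥ (v - u)) := by
    simpa using hM.dotProduct_mulVec_nonneg (v - u)
  have hDM_nonneg : 0 ≤ u ⬝ᵥ ((D - M) *ᵥ u) := by
    simpa using hDM.dotProduct_mulVec_nonneg u
  rw [mulVec_sub, sub_dotProduct, dotProduct_sub, dotProduct_sub, hMvu, hMuv] at hM_nonneg
  rw [sub_mulVec, dotProduct_sub] at hDM_nonneg
  linarith

end Matrix

/-- if `D` is positive definite, `M` PSD, `D − M` PSD, and `Mp = M†`,
then `wᵀ D⁻¹ w ≤ wᵀ M† w` for every `w` in the column space of `M`. -/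
theorem pinv_loewner_on_colSpace {n : ℕ} (D M Mp : Matrix (Fin n) (Fin n) ℝ)
    (hD : D.PosDef) (hM : M.PosSemidef) (hDM : (D - M).PosSemidef)
    (hMp : IsMoorePenroseInv M Mp) :
    ∀ w ∈ Set.range M.mulVec, w ⬝ᵥ (D⁻¹ *ᵥ w) ≤ w ⬝ᵥ (Mp *ᵥ w) := by
  rintro w ⟨v, rfl⟩
  have hDu : D *ᵥ (D⁻¹ *ᵥ (M *ᵥ v)) = M *ᵥ v := by
    rw [mulVec_mulVec, mul_nonsing_inv D (isUnit_iff_ne_zero.mpr hD.det_pos.ne'), one_mulVec]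
  calc (M *ᵥ v) ⬝ᵥ (D⁻¹ *ᵥ (M *ᵥ v))
      = (D⁻¹ *ᵥ (M *ᵥ v)) ⬝ᵥ (D *ᵥ (D⁻¹ *ᵥ (M *ᵥ v))) := by rw [hDu, dotProduct_comm]
    _ ≤ v ⬝ᵥ (M *ᵥ v) := dotProduct_mulVec_le_of_mulVec_eq hM hDM hDu
    _ = (M *ᵥ v) ⬝ᵥ (Mp *ᵥ (M *ᵥ v)) :=
      (dotProduct_mulVec_mulVec_of_mul_mul_eq (isHermitian_iff_isSymm.mp hM.1) hMp.1 v).symm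
end

section
/- Let σ_θη > 0, σ_η > 0, σ_γ > 0 be real constants. The function BR(b) = σ_θη / (σ_η² + b² σ_γ²) has exactly one fixed point b* in ℝ, and b* > 0. In particular, for σ_θη = σ_η = σ_γ = 1, b* is the unique real root of the cubic b³ + b − 1. -/
/-! Clearing the (positive) denominator turns the fixed-point equation `b = c / (d + b² e)` into
the cubic `e b³ + d b - c = 0`. For `d > 0` and `e ≥ 0` this cubic is strictly increasing, and it
changes sign between `0` and `c / d`, so it has exactly one root. -/

open Set

section FixedPoint

variable {c d e : ℝ}

theorem eq_div_iff_cubic_eq_zero (hd : 0 < d) (he : 0 ≤ e) (b : ℝ) :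
    b = c / (d + b ^ 2 * e) ↔ e * b ^ 3 + d * b - c = 0 := by
  have hden : d + b ^ 2 * e ≠ 0 := by positivity
  rw [eq_div_iff hden]
  constructor <;> intro h <;> linear_combination h

theorem strictMono_cubic (hd : 0 < d) (he : 0 ≤ e) :
    StrictMono fun b : ℝ => e * b ^ 3 + d * b - c := by
  have hcube : Monotone fun b : ℝ => e * b ^ 3 :=
    (Odd.strictMono_pow (R := ℝ) (n := 3) (by decide)).monotone.const_mul he
  exact (hcube.add_strictMono (strictMono_mul_left_of_pos hd)).add_const (-c)

theorem exists_cubic_eq_zero (hd : 0 < d) (he : 0 ≤ e) :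
    ∃ b, e * b ^ 3 + d * b - c = 0 := by
  have hcont : ContinuousOn (fun b : ℝ => e * b ^ 3 + d * b - c) (uIcc 0 (c / d)) := by fun_prop
  have hd' : d * (c / d) = c := mul_div_cancel₀ c hd.ne'
  have hsign : (0 : ℝ) ∈ uIcc (e * 0 ^ 3 + d * 0 - c) (e * (c / d) ^ 3 + d * (c / d) - c) := by
    rw [hd', mem_uIcc]
    rcases le_total 0 c with hc | hc
    · have : 0 ≤ (c / d) ^ 3 := by positivity
      left; constructor <;> nlinarith
    · have : (c / d) ^ 3 ≤ 0 := Odd.pow_nonpos (by decide) (div_nonpos_of_nonpos_of_nonneg hc hd.le)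
      right; constructor <;> nlinarith
  obtain ⟨b, -, hb⟩ := intermediate_value_uIcc hcont hsign
  exact ⟨b, hb⟩

theorem existsUnique_eq_div (hd : 0 < d) (he : 0 ≤ e) :
    ∃! b : ℝ, b = c / (d + b ^ 2 * e) := by
  simp only [eq_div_iff_cubic_eq_zero hd he]
  obtain ⟨b, hb⟩ := exists_cubic_eq_zero (c := c) hd he
  exact ⟨b, hb, fun b' hb' => (strictMono_cubic hd he).injective (hb'.trans hb.symm)⟩

end FixedPoint

theorem br_unique_fixed_point_general (sθη sη sγ : ℝ) (h1 : 0 < sθη) (h2 : 0 < sη) :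
    (∃! b : ℝ, b = sθη / (sη ^ 2 + b ^ 2 * sγ ^ 2)) ∧
      (∀ b : ℝ, b = sθη / (sη ^ 2 + b ^ 2 * sγ ^ 2) → 0 < b) ∧
      (sθη = 1 → sη = 1 → sγ = 1 →
        ∀ b : ℝ, b = sθη / (sη ^ 2 + b ^ 2 * sγ ^ 2) ↔ b ^ 3 + b - 1 = 0) := by
  have hd : 0 < sη ^ 2 := by positivity
  have he : 0 ≤ sγ ^ 2 := sq_nonneg sγ
  refine ⟨existsUnique_eq_div hd he, fun b hb => hb ▸ by positivity, ?_⟩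
  rintro rfl rfl rfl b
  rw [eq_div_iff_cubic_eq_zero hd he]
  ring_nf

/-- the best-response map `BR(b) = σθη / (ση² + b²σγ²)` has exactly one
fixed point, which is positive; for unit parameters, the fixed points are exactly the
real roots of `b³ + b − 1`. -/
theorem br_unique_fixed_point (sθη sη sγ : ℝ) (h1 : 0 < sθη) (h2 : 0 < sη) (h3 : 0 < sγ) :
    (∃! b : ℝ, b = sθη / (sη ^ 2 + b ^ 2 * sγ ^ 2)) ∧
      (∀ b : ℝ, b = sθη / (sη ^ 2 + b ^ 2 * sγ ^ 2) → 0 < b) ∧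
      (sθη = 1 → sη = 1 → sγ = 1 →
        ∀ b : ℝ, b = sθη / (sη ^ 2 + b ^ 2 * sγ ^ 2) ↔ b ^ 3 + b - 1 = 0) :=
  br_unique_fixed_point_general sθη sη sγ h1 h2
end

section
/- Suppose b ∈ ℝ^k satisfies both the signaling condition Σ_ηη b + diag(b)Σ_γγ(b∘b) = Σ_ηθ and the Lagrange condition 2Σ_ηη b + 4·diag(b)Σ_γγ(b∘b) − 2Σ_ηθ = λ(2Σ_ηη b + 4·diag(b)Σ_γγ(b∘b) − Σ_ηθ) for some λ ∈ ℝ with λ ≠ 1, and Σ_ηθ ≠ 0. Then b = ((3λ−2)/(2λ−2))·Σ_ηη⁻¹Σ_ηθ, i.e., b is a scalar multiple of the regression vector β = Σ_ηη⁻¹Σ_ηθ. -/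
open Matrix

/-- if `b` satisfies both the signaling condition and the Lagrange
condition with multiplier `λ ≠ 1`, and `Sηθ ≠ 0`, then `b` is the scalar multiple
`(3λ−2)/(2λ−2)` of the regression vector `β = Sηη⁻¹ Sηθ`. -/
theorem scoring_scalar_multiple {k : ℕ} (Sηη Sγγ : Matrix (Fin k) (Fin k) ℝ)
    (Sηθ : Fin k → ℝ) (hηη : Sηη.PosDef) (hγγ : Sγγ.IsSymm) (hθ : Sηθ ≠ 0)
    (b : Fin k → ℝ) (l : ℝ) (hl : l ≠ 1)
    (hsignal : Sηη *ᵥ b + Matrix.diagonal b *ᵥ (Sγγ *ᵥ (b * b)) = Sηθ)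
    (hlagrange :
      (2 : ℝ) • (Sηη *ᵥ b) + (4 : ℝ) • (Matrix.diagonal b *ᵥ (Sγγ *ᵥ (b * b))) - (2 : ℝ) • Sηθ
        = l • ((2 : ℝ) • (Sηη *ᵥ b) + (4 : ℝ) • (Matrix.diagonal b *ᵥ (Sγγ *ᵥ (b * b))) - Sηθ)) :
    b = ((3 * l - 2) / (2 * l - 2)) • (Sηη⁻¹ *ᵥ Sηθ) := by
  have hne : (2 * l - 2) ≠ 0 := by
    intro h; apply hl; linarith
  have hx : Sηη *ᵥ b = ((3 * l - 2) / (2 * l - 2)) • Sηθ := by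
    funext i
    have h1 := congrFun hsignal i
    have h2 := congrFun hlagrange i
    simp only [Pi.add_apply, Pi.sub_apply, Pi.smul_apply, smul_eq_mul] at h1 h2 ⊢
    rw [div_mul_eq_mul_div, eq_div_iff hne]
    linear_combination h2 - (4 - 4 * l) * h1
  have hdet : IsUnit Sηη.det := isUnit_iff_ne_zero.mpr (ne_of_gt hηη.det_pos)
  have : Sηη⁻¹ *ᵥ (Sηη *ᵥ b) = b := by
    rw [mulVec_mulVec, Matrix.nonsing_inv_mul _ hdet, one_mulVec]
  rw [← this, hx, mulVec_smul]
end

section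
/- Let Σ_ηη be symmetric positive definite, Σ_γγ symmetric positive semidefinite with nonnegative entries, Σ_ηθ ∈ ℝ^k, and b, λ satisfy the scoring first-order condition Σ_ηη b + 2·diag(b)Σ_γγ(b∘b) = λΣ_ηθ together with the obedience constraint bᵀΣ_ηη b + (b∘b)ᵀΣ_γγ(b∘b) = bᵀΣ_ηθ, with bᵀΣ_ηθ > 0. Then 1 ≤ λ < 2. -/
/-!
Pairing the first-order condition with `b` turns it into `l · bᵀΣ_ηθ = A + 2B`, where
`A = bᵀΣ_ηη b > 0` and `B = (b∘b)ᵀΣ_γγ(b∘b) ≥ 0`, while obedience says `bᵀΣ_ηθ = A + B`.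
Hence `l = 1 + B / (A + B)`, which lies in `[1, 2)` because `A > 0`.
-/

open Matrix

theorem Matrix.dotProduct_diagonal_mulVec {n R : Type*} [Fintype n] [DecidableEq n]
    [NonUnitalSemiring R] (b c v : n → R) : b ⬝ᵥ (diagonal c *ᵥ v) = (b * c) ⬝ᵥ v := by
  simp only [dotProduct, mulVec_diagonal, Pi.mul_apply, mul_assoc]

lemma one_le_and_lt_two_of_mul_add_eq_add_two_mul {l A B : ℝ} (hA : 0 < A) (hB : 0 ≤ B)
    (h : l * (A + B) = A + 2 * B) : 1 ≤ l ∧ l < 2 := by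
  constructor <;> nlinarith

theorem scoring_multiplier_bounds_general {k : ℕ} (Sηη Sγγ : Matrix (Fin k) (Fin k) ℝ)
    (Sηθ : Fin k → ℝ) (hηη : Sηη.PosDef) (hγγ : Sγγ.PosSemidef)
    (b : Fin k → ℝ) (l : ℝ)
    (hFOC : Sηη *ᵥ b + (2 : ℝ) • (Matrix.diagonal b *ᵥ (Sγγ *ᵥ (b * b))) = l • Sηθ)
    (hobed : b ⬝ᵥ (Sηη *ᵥ b) + (b * b) ⬝ᵥ (Sγγ *ᵥ (b * b)) = b ⬝ᵥ Sηθ)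
    (hpos : 0 < b ⬝ᵥ Sηθ) :
    1 ≤ l ∧ l < 2 := by
  have hb : b ≠ 0 := by
    rintro rfl
    simp at hpos
  have hFOC_b := congrArg (b ⬝ᵥ ·) hFOC
  simp only [dotProduct_add, dotProduct_smul, smul_eq_mul, dotProduct_diagonal_mulVec,
    ← hobed] at hFOC_b
  exact one_le_and_lt_two_of_mul_add_eq_add_two_mul (hηη.dotProduct_mulVec_pos hb)
    (hγγ.dotProduct_mulVec_nonneg (b * b)) hFOC_b.symm

/-- the Lagrange multiplier in the scoring first-order condition lies in `[1,2)`. -/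
theorem scoring_multiplier_bounds {k : ℕ} (Sηη Sγγ : Matrix (Fin k) (Fin k) ℝ)
    (Sηθ : Fin k → ℝ) (hηη : Sηη.PosDef) (hγγ : Sγγ.PosSemidef)
    (hnn : ∀ i j, 0 ≤ Sγγ i j) (b : Fin k → ℝ) (l : ℝ)
    (hFOC : Sηη *ᵥ b + (2 : ℝ) • (Matrix.diagonal b *ᵥ (Sγγ *ᵥ (b * b))) = l • Sηθ)
    (hobed : b ⬝ᵥ (Sηη *ᵥ b) + (b * b) ⬝ᵥ (Sγγ *ᵥ (b * b)) = b ⬝ᵥ Sηθ)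
    (hpos : 0 < b ⬝ᵥ Sηθ) :
    1 ≤ l ∧ l < 2 :=
  scoring_multiplier_bounds_general Sηη Sγγ Sηθ hηη hγγ b l hFOC hobed hpos
end
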